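/- (Bickel–Collins formula, eq. (2) of the paper.) Let G be a probability measure on ℝ with finite second moment, and define f(z) = ∫ φ(z − ν) dG(ν) and the estimator δ*(z) = z + f′(z)/f(z). Then the Bayes risk of δ* under squared error loss satisfies ∫∫ (δ*(z) − ν)² φ(z − ν) dz dG(ν) = 1 − ∫ (f′(z))²/f(z) dz. -/

import Mathlib

/-!
For fixed `z`, the map `c ↦ ∫ (c - ν)² φ(z - ν) dG(ν)` is a quadratic in `c`. Since
`f′(z) = ∫ (ν - z) φ(z - ν) dG(ν)`, it is minimised at `c = δ*(z)`, with minimum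
`∫ (ν - z)² φ(z - ν) dG(ν) - f′(z)²/f(z)`. Integrating over `z` and exchanging the integrals,
the first term contributes `∫∫ (ν - z)² φ(z - ν) dz dG(ν) = 1`. The same pointwise identity,
through the nonnegativity of the minimum, bounds `f′²/f` by an integrable function, which supplies
the integrability that Fubini's theorem needs.
-/

open MeasureTheory

/-- The standard normal density `φ(x) = (2π)^{-1/2} e^{-x²/2}`. -/
noncomputable def stdNormalPDF (x : ℝ) : ℝ :=
  (Real.sqrt (2 * Real.pi))⁻¹ * Real.exp (-x ^ 2 / 2)

open Real ProbabilityTheory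

lemma stdNormalPDF_eq_gaussianPDFReal : stdNormalPDF = gaussianPDFReal 0 1 := by
  ext x
  simp [stdNormalPDF, gaussianPDFReal]

lemma stdNormalPDF_pos (x : ℝ) : 0 < stdNormalPDF x := by
  rw [stdNormalPDF_eq_gaussianPDFReal]
  exact gaussianPDFReal_pos _ _ _ one_ne_zero

@[fun_prop]
lemma continuous_stdNormalPDF : Continuous stdNormalPDF := by
  unfold stdNormalPDF
  fun_prop

lemma stdNormalPDF_le_exp (x : ℝ) : stdNormalPDF x ≤ exp (-x ^ 2 / 2) := by
  have hconst : (√(2 * π))⁻¹ ≤ 1 :=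
    inv_le_one_of_one_le₀ (one_le_sqrt.2 (by linarith [pi_gt_three]))
  exact mul_le_of_le_one_left (exp_pos _).le hconst

lemma stdNormalPDF_le_one (x : ℝ) : stdNormalPDF x ≤ 1 :=
  (stdNormalPDF_le_exp x).trans (exp_le_one_iff.2 (by nlinarith))

lemma sq_mul_stdNormalPDF_le_two (x : ℝ) : x ^ 2 * stdNormalPDF x ≤ 2 := by
  have hexp : x ^ 2 ≤ 2 * exp (x ^ 2 / 2) := by linarith [add_one_le_exp (x ^ 2 / 2)]
  calc x ^ 2 * stdNormalPDF x ≤ 2 * exp (x ^ 2 / 2) * exp (-x ^ 2 / 2) :=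
        mul_le_mul hexp (stdNormalPDF_le_exp x) (stdNormalPDF_pos x).le (by positivity)
    _ = 2 := by rw [mul_assoc, ← exp_add]; ring_nf; simp

lemma abs_mul_stdNormalPDF_le_three (x : ℝ) : |x * stdNormalPDF x| ≤ 3 := by
  have hx : |x| ≤ 1 + x ^ 2 := by nlinarith [abs_nonneg x, sq_abs x]
  rw [abs_mul, abs_of_pos (stdNormalPDF_pos x)]
  nlinarith [stdNormalPDF_le_one x, sq_mul_stdNormalPDF_le_two x, stdNormalPDF_pos x]

lemma hasDerivAt_stdNormalPDF (x : ℝ) :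
    HasDerivAt stdNormalPDF (-x * stdNormalPDF x) x := by
  have hexponent : HasDerivAt (fun y : ℝ ↦ -y ^ 2 / 2) (-x) x := by
    simpa using ((hasDerivAt_pow 2 x).neg.div_const 2).congr_deriv (by ring)
  exact (hexponent.exp.const_mul (√(2 * π))⁻¹).congr_deriv (by simp only [stdNormalPDF]; ring)

lemma integral_sq_mul_stdNormalPDF : ∫ x, x ^ 2 * stdNormalPDF x = 1 := by
  have h := variance_of_integral_eq_zero (X := id) (μ := gaussianReal 0 1) aemeasurable_id
    integral_id_gaussianReal
  rw [variance_id_gaussianReal, integral_gaussianReal_eq_integral_smul one_ne_zero] at h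
  simp only [id, smul_eq_mul, ← stdNormalPDF_eq_gaussianPDFReal] at h
  simp_rw [mul_comm _ (stdNormalPDF _), ← h, NNReal.coe_one]

-- A function that is not integrable has Bochner integral `0`.
lemma integrable_sq_mul_stdNormalPDF : Integrable fun x ↦ x ^ 2 * stdNormalPDF x :=
  Integrable.of_integral_ne_zero (by simp [integral_sq_mul_stdNormalPDF])

lemma MeasureTheory.Integrable.sq_sub_mul {α : Type*} [MeasurableSpace α] {μ : Measure α}
    {g w : α → ℝ}
    (hw : Integrable w μ) (hgw : Integrable (fun a ↦ g a * w a) μ)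
    (hg2w : Integrable (fun a ↦ g a ^ 2 * w a) μ) (c : ℝ) :
    Integrable (fun a ↦ (c - g a) ^ 2 * w a) μ :=
  (((hw.const_mul (c ^ 2)).sub (hgw.const_mul (2 * c))).add hg2w).congr
    (ae_of_all _ fun a ↦ by simp only [Pi.add_apply, Pi.sub_apply]; ring)

lemma integral_sq_sub_mul_eq {α : Type*} [MeasurableSpace α] {μ : Measure α} {g w : α → ℝ}
    (hw : Integrable w μ) (hgw : Integrable (fun a ↦ g a * w a) μ)
    (hg2w : Integrable (fun a ↦ g a ^ 2 * w a) μ) (hw0 : ∫ a, w a ∂μ ≠ 0) :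
    ∫ a, ((∫ b, g b * w b ∂μ) / (∫ b, w b ∂μ) - g a) ^ 2 * w a ∂μ
      = ∫ a, g a ^ 2 * w a ∂μ - (∫ a, g a * w a ∂μ) ^ 2 / ∫ a, w a ∂μ := by
  set c := (∫ b, g b * w b ∂μ) / (∫ b, w b ∂μ) with hc
  have hexpand : ∀ a, (c - g a) ^ 2 * w a = c ^ 2 * w a - 2 * c * (g a * w a) + g a ^ 2 * w a :=
    fun a ↦ by ring
  simp_rw [hexpand]
  rw [integral_add (by exact (hw.const_mul _).sub (hgw.const_mul _)) hg2w,
    integral_sub (hw.const_mul _) (hgw.const_mul _), integral_const_mul, integral_const_mul, hc]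
  field_simp
  ring

lemma integrable_sq_mul_stdNormalPDF_sub (ν : ℝ) :
    Integrable fun z ↦ (z - ν) ^ 2 * stdNormalPDF (z - ν) :=
  integrable_sq_mul_stdNormalPDF.comp_sub_right ν

lemma integral_sq_mul_stdNormalPDF_sub (ν : ℝ) :
    ∫ z, (z - ν) ^ 2 * stdNormalPDF (z - ν) = 1 := by
  rw [integral_sub_right_eq_self (fun x ↦ x ^ 2 * stdNormalPDF x) ν, integral_sq_mul_stdNormalPDF]

noncomputable def normalMixture (G : Measure ℝ) (z : ℝ) : ℝ := ∫ ν, stdNormalPDF (z - ν) ∂G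

-- The rule `δ*`; by `hasDerivAt_normalMixture` it is the posterior mean `E[ν | Z = z]`.
noncomputable def tweedieRule (G : Measure ℝ) (z : ℝ) : ℝ :=
  z + deriv (normalMixture G) z / normalMixture G z

section Mixture

variable (G : Measure ℝ) [IsFiniteMeasure G]

lemma integrable_stdNormalPDF_sub (z : ℝ) : Integrable (fun ν ↦ stdNormalPDF (z - ν)) G :=
  .of_bound (by fun_prop) 1 (ae_of_all _ fun ν ↦ by
    rw [norm_of_nonneg (stdNormalPDF_pos _).le]; exact stdNormalPDF_le_one _)

lemma integrable_sub_mul_stdNormalPDF_sub (z : ℝ) :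
    Integrable (fun ν ↦ (ν - z) * stdNormalPDF (z - ν)) G :=
  .of_bound (by fun_prop) 3 (ae_of_all _ fun ν ↦ by
    rw [norm_eq_abs, abs_mul, abs_sub_comm, ← abs_mul]; exact abs_mul_stdNormalPDF_le_three _)

lemma integrable_sq_sub_mul_stdNormalPDF_sub (z : ℝ) :
    Integrable (fun ν ↦ (ν - z) ^ 2 * stdNormalPDF (z - ν)) G :=
  .of_bound (by fun_prop) 2 (ae_of_all _ fun ν ↦ by
    rw [norm_of_nonneg (by positivity [stdNormalPDF_pos (z - ν)]), ← neg_sub, neg_sq]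
    exact sq_mul_stdNormalPDF_le_two _)

lemma hasDerivAt_normalMixture (z : ℝ) :
    HasDerivAt (normalMixture G) (∫ ν, (ν - z) * stdNormalPDF (z - ν) ∂G) z := by
  have h := (hasDerivAt_integral_of_dominated_loc_of_deriv_le (μ := G)
    (F := fun x ν ↦ stdNormalPDF (x - ν)) (F' := fun x ν ↦ -(x - ν) * stdNormalPDF (x - ν))
    (bound := fun _ ↦ 3)
    (Metric.ball_mem_nhds z one_pos) (.of_forall fun x ↦ by fun_prop)
    (integrable_stdNormalPDF_sub G z) (by fun_prop)
    (ae_of_all _ fun ν x _ ↦ by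
      rw [norm_eq_abs, neg_mul, abs_neg]; exact abs_mul_stdNormalPDF_le_three _)
    (integrable_const 3)
    (ae_of_all _ fun ν x _ ↦ (hasDerivAt_stdNormalPDF (x - ν)).comp_sub_const x ν)).2
  exact h.congr_deriv (integral_congr_ae (ae_of_all _ fun ν ↦ by ring))

lemma continuous_normalMixture : Continuous (normalMixture G) :=
  continuous_iff_continuousAt.2 fun z ↦ (hasDerivAt_normalMixture G z).continuousAt

lemma integrable_prod_sq_sub_mul_stdNormalPDF :
    Integrable (fun p : ℝ × ℝ ↦ (p.1 - p.2) ^ 2 * stdNormalPDF (p.2 - p.1)) (G.prod volume) := by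
  simp_rw [← neg_sub (Prod.snd _), neg_sq]
  refine (integrable_prod_iff (by fun_prop)).2
    ⟨ae_of_all _ integrable_sq_mul_stdNormalPDF_sub, ?_⟩
  simp_rw [norm_of_nonneg (mul_nonneg (sq_nonneg _) (stdNormalPDF_pos _).le),
    integral_sq_mul_stdNormalPDF_sub, integrable_const]

lemma integrable_integral_sq_sub_mul_stdNormalPDF_sub :
    Integrable fun z ↦ ∫ ν, (ν - z) ^ 2 * stdNormalPDF (z - ν) ∂G :=
  (integrable_prod_sq_sub_mul_stdNormalPDF G).integral_prod_right

lemma integral_integral_sq_sub_mul_stdNormalPDF_sub :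
    ∫ z, ∫ ν, (ν - z) ^ 2 * stdNormalPDF (z - ν) ∂G = G.real Set.univ := by
  rw [← integral_integral_swap (integrable_prod_sq_sub_mul_stdNormalPDF G)]
  have hsection (ν : ℝ) : ∫ z, (ν - z) ^ 2 * stdNormalPDF (z - ν) = 1 := by
    simp_rw [← neg_sub _ ν, neg_sq]; exact integral_sq_mul_stdNormalPDF_sub ν
  simp [hsection]

lemma measurable_tweedieRule : Measurable (tweedieRule G) :=
  measurable_id.add ((measurable_deriv _).div (continuous_normalMixture G).measurable)

variable [NeZero G]

lemma normalMixture_pos (z : ℝ) : 0 < normalMixture G z := by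
  rw [normalMixture, integral_pos_iff_support_of_nonneg (fun ν ↦ (stdNormalPDF_pos _).le)
    (integrable_stdNormalPDF_sub G z)]
  simp [Function.support_eq_univ fun ν ↦ (stdNormalPDF_pos (z - ν)).ne', NeZero.ne G]

lemma integral_sq_tweedieRule_sub (z : ℝ) :
    ∫ ν, (tweedieRule G z - ν) ^ 2 * stdNormalPDF (z - ν) ∂G
      = ∫ ν, (ν - z) ^ 2 * stdNormalPDF (z - ν) ∂G
        - deriv (normalMixture G) z ^ 2 / normalMixture G z := by
  have h := integral_sq_sub_mul_eq (integrable_stdNormalPDF_sub G z)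
    (integrable_sub_mul_stdNormalPDF_sub G z) (integrable_sq_sub_mul_stdNormalPDF_sub G z)
    (normalMixture_pos G z).ne'
  rw [← normalMixture, ← (hasDerivAt_normalMixture G z).deriv] at h
  rw [← h]
  congr 1 with ν
  rw [tweedieRule]; ring

lemma sq_deriv_div_normalMixture_le (z : ℝ) :
    deriv (normalMixture G) z ^ 2 / normalMixture G z
      ≤ ∫ ν, (ν - z) ^ 2 * stdNormalPDF (z - ν) ∂G := by
  have hrisk := integral_sq_tweedieRule_sub G z
  have hrisk_nonneg : 0 ≤ ∫ ν, (tweedieRule G z - ν) ^ 2 * stdNormalPDF (z - ν) ∂G :=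
    integral_nonneg fun ν ↦ mul_nonneg (sq_nonneg _) (stdNormalPDF_pos _).le
  linarith

lemma integrable_sq_deriv_div_normalMixture :
    Integrable fun z ↦ deriv (normalMixture G) z ^ 2 / normalMixture G z := by
  refine (integrable_integral_sq_sub_mul_stdNormalPDF_sub G).mono'
    ((measurable_deriv _).pow_const 2 |>.div (continuous_normalMixture G).measurable
      |>.aestronglyMeasurable) (ae_of_all _ fun z ↦ ?_)
  rw [norm_of_nonneg (div_nonneg (sq_nonneg _) (normalMixture_pos G z).le)]
  exact sq_deriv_div_normalMixture_le G z

lemma integrable_prod_sq_tweedieRule_sub_mul_stdNormalPDF :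
    Integrable (fun p : ℝ × ℝ ↦ (tweedieRule G p.2 - p.1) ^ 2 * stdNormalPDF (p.2 - p.1))
      (G.prod volume) := by
  have hmeas := measurable_tweedieRule G
  refine (integrable_prod_iff' (by fun_prop)).2 ⟨ae_of_all _ fun z ↦ ?_, ?_⟩
  · exact (integrable_stdNormalPDF_sub G z).sq_sub_mul (integrable_sub_mul_stdNormalPDF_sub G z)
      (integrable_sq_sub_mul_stdNormalPDF_sub G z) (tweedieRule G z - z) |>.congr
      (ae_of_all _ fun ν ↦ by ring_nf)
  · simp_rw [norm_of_nonneg (mul_nonneg (sq_nonneg _) (stdNormalPDF_pos _).le),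
      integral_sq_tweedieRule_sub]
    exact (integrable_integral_sq_sub_mul_stdNormalPDF_sub G).sub
      (integrable_sq_deriv_div_normalMixture G)

end Mixture

theorem stmt4_general (G : Measure ℝ) [IsProbabilityMeasure G]
    (f : ℝ → ℝ) (hf : f = fun z : ℝ => ∫ ν, stdNormalPDF (z - ν) ∂G)
    (δs : ℝ → ℝ) (hδs : δs = fun z : ℝ => z + deriv f z / f z) :
    ∫ ν, (∫ z, (δs z - ν) ^ 2 * stdNormalPDF (z - ν)) ∂G
      = 1 - ∫ z, (deriv f z) ^ 2 / f z := by
  obtain rfl : f = normalMixture G := hf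
  obtain rfl : δs = tweedieRule G := hδs
  calc ∫ ν, (∫ z, (tweedieRule G z - ν) ^ 2 * stdNormalPDF (z - ν)) ∂G
      = ∫ z, ∫ ν, (tweedieRule G z - ν) ^ 2 * stdNormalPDF (z - ν) ∂G :=
        integral_integral_swap (integrable_prod_sq_tweedieRule_sub_mul_stdNormalPDF G)
    _ = ∫ z, ((∫ ν, (ν - z) ^ 2 * stdNormalPDF (z - ν) ∂G)
          - deriv (normalMixture G) z ^ 2 / normalMixture G z) := by
        simp_rw [integral_sq_tweedieRule_sub]
    _ = 1 - ∫ z, deriv (normalMixture G) z ^ 2 / normalMixture G z := by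
        rw [integral_sub (integrable_integral_sq_sub_mul_stdNormalPDF_sub G)
          (integrable_sq_deriv_div_normalMixture G),
          integral_integral_sq_sub_mul_stdNormalPDF_sub, probReal_univ]

/-- **Bickel–Collins formula.** Let `G` be a probability measure on `ℝ` with
finite second moment, `f(z) = ∫ φ(z − ν) dG(ν)` and `δ*(z) = z + f′(z)/f(z)`. Then the
Bayes risk of `δ*` under squared error loss satisfies
`∫∫ (δ*(z) − ν)² φ(z − ν) dz dG(ν) = 1 − ∫ (f′(z))²/f(z) dz`. -/
theorem stmt4 (G : Measure ℝ) [IsProbabilityMeasure G]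
    (hG : Integrable (fun ν : ℝ => ν ^ 2) G)
    (f : ℝ → ℝ) (hf : f = fun z : ℝ => ∫ ν, stdNormalPDF (z - ν) ∂G)
    (δs : ℝ → ℝ) (hδs : δs = fun z : ℝ => z + deriv f z / f z) :
    ∫ ν, (∫ z, (δs z - ν) ^ 2 * stdNormalPDF (z - ν)) ∂G
      = 1 - ∫ z, (deriv f z) ^ 2 / f z :=
  stmt4_general G f hf δs hδs
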